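/- arXiv:math/0410364 — 3 statements merged into one kernel-verified Lean document; each statement's English description precedes it below -/
import Mathlib

section
/- Every cut γ = γ₁ * γ₂ of a shuffle γ of two words σ and σ' with disjoint supports induces cuts σ = σ₁ * σ₂ and σ' = σ'₁ * σ'₂ such that γ₁ is a shuffle of σ₁ and σ'₁, and γ₂ is a shuffle of σ₂ and σ'₂; conversely every shuffle of σ and σ' arises as a concatenation γ₁ * γ₂ with γᵢ a shuffle of σᵢ and σ'ᵢ for some such cuts. -/
/-- `IsShuffle s t g` : `g` is a shuffle (interleaving preserving relative orders) of `s` and `t`. -/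
inductive IsShuffle {α : Type*} : List α → List α → List α → Prop
  | nil : IsShuffle [] [] []
  | left {a : α} {s t g : List α} : IsShuffle s t g → IsShuffle (a :: s) t (a :: g)
  | right {a : α} {s t g : List α} : IsShuffle s t g → IsShuffle s (a :: t) (a :: g)

private lemma shuffle_split {α : Type*} {s t g : List α} (h : IsShuffle s t g) :
    ∀ g₁ g₂ : List α, g = g₁ ++ g₂ →
      ∃ s₁ s₂ t₁ t₂ : List α, s = s₁ ++ s₂ ∧ t = t₁ ++ t₂ ∧
        IsShuffle s₁ t₁ g₁ ∧ IsShuffle s₂ t₂ g₂ := by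
  induction h with
  | nil =>
    intro g₁ g₂ hg
    obtain ⟨h1, h2⟩ := List.append_eq_nil_iff.mp hg.symm
    subst h1; subst h2
    exact ⟨[], [], [], [], rfl, rfl, .nil, .nil⟩
  | @left a s t g _ ih =>
    intro g₁ g₂ hg
    cases g₁ with
    | nil =>
      simp only [List.nil_append] at hg; subst hg
      exact ⟨[], a :: s, [], t, rfl, rfl, .nil, .left ‹_›⟩
    | cons b g₁' =>
      simp only [List.cons_append, List.cons.injEq] at hg
      obtain ⟨rfl, hg⟩ := hg
      obtain ⟨s₁, s₂, t₁, t₂, rfl, rfl, h1, h2⟩ := ih g₁' g₂ hg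
      exact ⟨a :: s₁, s₂, t₁, t₂, rfl, rfl, .left h1, h2⟩
  | @right a s t g _ ih =>
    intro g₁ g₂ hg
    cases g₁ with
    | nil =>
      simp only [List.nil_append] at hg; subst hg
      exact ⟨[], s, [], a :: t, rfl, rfl, .nil, .right ‹_›⟩
    | cons b g₁' =>
      simp only [List.cons_append, List.cons.injEq] at hg
      obtain ⟨rfl, hg⟩ := hg
      obtain ⟨s₁, s₂, t₁, t₂, rfl, rfl, h1, h2⟩ := ih g₁' g₂ hg
      exact ⟨s₁, s₂, a :: t₁, t₂, rfl, rfl, .right h1, h2⟩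

private lemma shuffle_append {α : Type*} {s₁ t₁ g₁ s₂ t₂ g₂ : List α}
    (h1 : IsShuffle s₁ t₁ g₁) (h2 : IsShuffle s₂ t₂ g₂) :
    IsShuffle (s₁ ++ s₂) (t₁ ++ t₂) (g₁ ++ g₂) := by
  induction h1 with
  | nil => simpa using h2
  | left _ ih => exact .left ih
  | right _ ih => exact .right ih

/-- Every cut `γ = γ₁ * γ₂` of a shuffle `γ` of two words `σ`, `σ'` with disjoint supports
induces cuts `σ = σ₁ * σ₂`, `σ' = σ₁' * σ₂'` with `γ₁` a shuffle of `σ₁, σ₁'` and `γ₂` a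
shuffle of `σ₂, σ₂'`; conversely any such concatenation of shuffles of the pieces of cuts
is a shuffle of `σ` and `σ'`. -/
theorem stmt6 {α : Type*} [DecidableEq α] (σ σ' : List α)
    (hdisj : σ.toFinset ∩ σ'.toFinset = ∅) :
    (∀ γ₁ γ₂ : List α, IsShuffle σ σ' (γ₁ ++ γ₂) →
      ∃ σ₁ σ₂ σ₁' σ₂' : List α, σ = σ₁ ++ σ₂ ∧ σ' = σ₁' ++ σ₂' ∧
        IsShuffle σ₁ σ₁' γ₁ ∧ IsShuffle σ₂ σ₂' γ₂) ∧
    (∀ σ₁ σ₂ σ₁' σ₂' γ₁ γ₂ : List α, σ = σ₁ ++ σ₂ → σ' = σ₁' ++ σ₂' →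
      IsShuffle σ₁ σ₁' γ₁ → IsShuffle σ₂ σ₂' γ₂ → IsShuffle σ σ' (γ₁ ++ γ₂)) := by
  constructor
  · intro γ₁ γ₂ h
    exact shuffle_split h γ₁ γ₂ rfl
  · rintro σ₁ σ₂ σ₁' σ₂' γ₁ γ₂ rfl rfl h1 h2
    exact shuffle_append h1 h2
end

section
/- The double word Hopf algebra dWHA, with basis the substitutions (pairs of words with equal support up to renaming of letters), multiplication m(p ⊗ p') = (ρ*ρ' over σ ×_sh σ') for disjointly-supported representatives, and comultiplication given by summing over good cuts of the bottom word, is a bialgebra: the comultiplication is an algebra morphism. -/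
open Finsupp TensorProduct

/-- All shuffles of two words (with multiplicity). -/
def shuffles : List ℕ → List ℕ → List (List ℕ)
  | [], t => [t]
  | s, [] => [s]
  | a :: s, b :: t =>
      ((shuffles s (b :: t)).map (a :: ·)) ++ ((shuffles (a :: s) t).map (b :: ·))

/-- The free abelian group on pairs of words: representatives for `dWHA`. -/
abbrev DW : Type := (List ℕ × List ℕ) →₀ ℤ

/-- Good cuts of a word: cuts into a prefix and a suffix with disjoint supports. -/
def goodCuts (σ : List ℕ) : List (List ℕ × List ℕ) :=
  ((List.range (σ.length + 1)).map (fun i => (σ.take i, σ.drop i))).filter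
    (fun c => c.1.toFinset ∩ c.2.toFinset = ∅)

/-- `invPart ρ τ` : the maximal subword of `ρ` whose support is that of `τ`
(for `supp τ ⊆ supp ρ`), i.e. `p⁻¹(τ)`. -/
def invPart (ρ τ : List ℕ) : List ℕ := ρ.filter (fun a => a ∈ τ)

/-- Multiplication of `dWHA` on basis substitutions written with disjoint supports:
concatenate top words, shuffle bottom words. -/
noncomputable def mulDW (p p' : List ℕ × List ℕ) : DW :=
  ((shuffles p.2 p'.2).map (fun γ => Finsupp.single (p.1 ++ p'.1, γ) (1 : ℤ))).sum

/-- Comultiplication of `dWHA` on a basis substitution: sum over good cuts of the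
bottom word, with `p⁻¹` of each piece on top. -/
noncomputable def comulDW (p : List ℕ × List ℕ) : DW ⊗[ℤ] DW :=
  ((goodCuts p.2).map (fun c =>
    Finsupp.single (invPart p.1 c.1, c.1) (1 : ℤ) ⊗ₜ[ℤ]
      Finsupp.single (invPart p.1 c.2, c.2) (1 : ℤ))).sum

theorem shuffles_nil_right (s : List ℕ) : shuffles s [] = [s] := by
  cases s <;> simp [shuffles]

theorem shuffles_nil_left (t : List ℕ) : shuffles [] t = [t] := by
  cases t <;> simp [shuffles]

def cuts : List ℕ → List (List ℕ × List ℕ)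
  | [] => [([], [])]
  | a :: s => ([], a :: s) :: (cuts s).map (fun c => (a :: c.1, c.2))

theorem cuts_eq (σ : List ℕ) :
    ((List.range (σ.length + 1)).map (fun i => (σ.take i, σ.drop i))) = cuts σ := by
  induction σ with
  | nil => rfl
  | cons a s ih =>
    rw [cuts, ← ih, List.length_cons, List.range_succ_eq_map]
    simp [List.map_map, Function.comp_def]

theorem goodCuts_eq (σ : List ℕ) :
    goodCuts σ = (cuts σ).filter (fun c => c.1.toFinset ∩ c.2.toFinset = ∅) := by
  rw [goodCuts, cuts_eq]

theorem cuts_append {σ : List ℕ} {c : List ℕ × List ℕ} (hc : c ∈ cuts σ) :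
    c.1 ++ c.2 = σ := by
  induction σ generalizing c with
  | nil => simp [cuts] at hc; simp [hc]
  | cons a s ih =>
    rw [cuts] at hc
    rcases List.mem_cons.1 hc with rfl | hm
    · rfl
    · obtain ⟨d, hd, rfl⟩ := List.mem_map.1 hm
      simp [ih hd]

theorem perm_of_mem_shuffles : ∀ (s t γ : List ℕ), γ ∈ shuffles s t → γ.Perm (s ++ t) := by
  intro s t
  induction s, t using shuffles.induct with
  | case1 t => intro γ hγ; rw [shuffles_nil_left] at hγ; simp at hγ; simp [hγ]
  | case2 s h => intro γ hγ; rw [shuffles_nil_right] at hγ; simp at hγ; simp [hγ]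
  | case3 a s b t ih1 ih2 =>
    intro γ hγ
    rw [shuffles] at hγ
    rcases List.mem_append.1 hγ with hm | hm <;> rcases List.mem_map.1 hm with ⟨δ, hδ, rfl⟩
    · exact (ih1 δ hδ).cons a
    · exact ((ih2 δ hδ).cons b).trans List.perm_middle.symm

theorem mem_shuffles {s t γ : List ℕ} (hγ : γ ∈ shuffles s t) (a : ℕ) :
    a ∈ γ ↔ a ∈ s ∨ a ∈ t := by
  rw [(perm_of_mem_shuffles s t γ hγ).mem_iff, List.mem_append]

theorem toFinset_shuffles {s t γ : List ℕ} (hγ : γ ∈ shuffles s t) :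
    γ.toFinset = s.toFinset ∪ t.toFinset := by
  ext x
  simp [List.mem_toFinset, mem_shuffles hγ]

theorem mulDW_pair (r1 s1 r2 s2 : List ℕ) :
    mulDW (r1, s1) (r2, s2)
      = ((shuffles s1 s2).map (fun γ => Finsupp.single (r1 ++ r2, γ) (1 : ℤ))).sum := rfl

theorem sum_map_add {α M : Type*} [AddCommMonoid M] (l : List α) (g h : α → M) :
    (l.map (fun x => g x + h x)).sum = (l.map g).sum + (l.map h).sum := by
  induction l with
  | nil => simp
  | cons a l ih => simp [ih]; abel

theorem sum_map_filter {α M : Type*} [AddCommMonoid M] (l : List α) (p : α → Prop)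
    [DecidablePred p] (g : α → M) :
    ((l.filter (fun x => p x)).map g).sum = (l.map (fun x => if p x then g x else 0)).sum := by
  induction l with
  | nil => simp
  | cons a l ih =>
    by_cases hp : p a <;> simp [List.filter_cons, hp, ih]

theorem list_sum_tmul {α : Type*} (l : List α) (g : α → DW) (m : DW) :
    ((l.map g).sum) ⊗ₜ[ℤ] m = (l.map (fun x => g x ⊗ₜ[ℤ] m)).sum := by
  induction l with
  | nil => simp [TensorProduct.zero_tmul]
  | cons a l ih => simp [TensorProduct.add_tmul, ih]

theorem tmul_list_sum {α : Type*} (l : List α) (g : α → DW) (m : DW) :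
    m ⊗ₜ[ℤ] ((l.map g).sum) = (l.map (fun x => m ⊗ₜ[ℤ] g x)).sum := by
  induction l with
  | nil => simp [TensorProduct.tmul_zero]
  | cons a l ih => simp [TensorProduct.tmul_add, ih]

theorem key {M : Type*} [AddCommMonoid M] :
    ∀ (σ σ' : List ℕ) (f : List ℕ × List ℕ → M),
    ((shuffles σ σ').map (fun γ => ((cuts γ).map f).sum)).sum
      = ((cuts σ).map (fun c => ((cuts σ').map (fun c' =>
          ((shuffles c.1 c'.1).map (fun γ1 =>
            ((shuffles c.2 c'.2).map (fun γ2 => f (γ1, γ2))).sum)).sum)).sum)).sum := by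
  intro σ σ'
  induction σ, σ' using shuffles.induct with
  | case1 t =>
    intro f
    simp [shuffles_nil_left, cuts, List.map_map, Function.comp_def]
  | case2 s h =>
    intro f
    simp [shuffles_nil_right, cuts, List.map_map, Function.comp_def]
  | case3 a s b t ih1 ih2 =>
    intro f
    rw [shuffles, List.map_append, List.sum_append, List.map_map, List.map_map]
    simp only [Function.comp_def, cuts, List.map_cons, List.sum_cons, List.map_map]
    rw [sum_map_add, sum_map_add,
      ih1 (fun c => f (a :: c.1, c.2)), ih2 (fun c => f (b :: c.1, c.2))]
    simp only [cuts, List.map_cons, List.sum_cons, List.map_map, Function.comp_def,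
      shuffles, shuffles_nil_left, shuffles_nil_right, List.map_append, List.sum_append,
      List.map_map, List.map_nil, List.sum_nil, sum_map_add, add_zero, zero_add]
    abel

/-- The double word Hopf algebra `dWHA` is a bialgebra: its comultiplication is an
algebra morphism.  Stated on basis substitutions `p = (ρ,σ)`, `p' = (ρ',σ')`
(with `supp ρ = supp σ`, `supp ρ' = supp σ'`, written with disjoint supports):
`μ(m(p ⊗ p')) = (m ⊗ m)((id ⊗ tw ⊗ id)((μ ⊗ μ)(p ⊗ p')))`. -/
theorem stmt7 (ρ σ ρ' σ' : List ℕ)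
    (h : ρ.toFinset = σ.toFinset) (h' : ρ'.toFinset = σ'.toFinset)
    (hd : ρ.toFinset ∩ ρ'.toFinset = ∅) :
    ((shuffles σ σ').map (fun γ => comulDW (ρ ++ ρ', γ))).sum
      = ((goodCuts σ).map (fun c => ((goodCuts σ').map (fun c' =>
          (mulDW (invPart ρ c.1, c.1) (invPart ρ' c'.1, c'.1)) ⊗ₜ[ℤ]
            (mulDW (invPart ρ c.2, c.2) (invPart ρ' c'.2, c'.2)))).sum)).sum := by
  classical
  have hσσ' : ∀ x, x ∈ σ → x ∈ σ' → False := by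
    intro x hx hx'
    have : x ∈ σ.toFinset ∩ σ'.toFinset := by
      simp [List.mem_toFinset, hx, hx']
    rw [← h, ← h', hd] at this
    simp at this
  set F : List ℕ × List ℕ → DW ⊗[ℤ] DW := fun c =>
    if c.1.toFinset ∩ c.2.toFinset = ∅ then
      Finsupp.single (invPart (ρ ++ ρ') c.1, c.1) (1 : ℤ) ⊗ₜ[ℤ]
        Finsupp.single (invPart (ρ ++ ρ') c.2, c.2) (1 : ℤ)
    else 0 with hF
  have hcomul : ∀ γ : List ℕ, comulDW (ρ ++ ρ', γ) = ((cuts γ).map F).sum := by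
    intro γ
    rw [comulDW]
    show ((goodCuts γ).map _).sum = _
    rw [goodCuts_eq, sum_map_filter]
  have hF0 : ∀ γ1 γ2 : List ℕ, γ1.toFinset ∩ γ2.toFinset ≠ ∅ → F (γ1, γ2) = 0 := by
    intro γ1 γ2 hne
    simp only [hF, if_neg hne]
  simp only [hcomul]
  rw [key σ σ' F]
  rw [goodCuts_eq, goodCuts_eq, sum_map_filter]
  congr 1
  refine List.map_congr_left ?_
  intro c hc
  have hcap : c.1 ++ c.2 = σ := cuts_append hc
  have hc1 : ∀ x, x ∈ c.1 → x ∈ σ := fun x hx => hcap ▸ List.mem_append_left _ hx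
  have hc2 : ∀ x, x ∈ c.2 → x ∈ σ := fun x hx => hcap ▸ List.mem_append_right _ hx
  by_cases g1 : c.1.toFinset ∩ c.2.toFinset = ∅
  · rw [if_pos g1, sum_map_filter]
    congr 1
    refine List.map_congr_left ?_
    intro c' hc'
    have hcap' : c'.1 ++ c'.2 = σ' := cuts_append hc'
    have hc1' : ∀ x, x ∈ c'.1 → x ∈ σ' := fun x hx => hcap' ▸ List.mem_append_left _ hx
    have hc2' : ∀ x, x ∈ c'.2 → x ∈ σ' := fun x hx => hcap' ▸ List.mem_append_right _ hx
    by_cases g2 : c'.1.toFinset ∩ c'.2.toFinset = ∅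
    · rw [if_pos g2]
      rw [mulDW_pair, mulDW_pair, list_sum_tmul]
      simp only [tmul_list_sum]
      refine congrArg List.sum (List.map_congr_left ?_)
      intro γ1 hγ1
      refine congrArg List.sum (List.map_congr_left ?_)
      intro γ2 hγ2
      have haσ : ∀ a ∈ ρ, a ∈ σ := fun a ha =>
        List.mem_toFinset.1 (h ▸ List.mem_toFinset.2 ha)
      have haσ' : ∀ a ∈ ρ', a ∈ σ' := fun a ha =>
        List.mem_toFinset.1 (h' ▸ List.mem_toFinset.2 ha)
      have hm1 := fun a => mem_shuffles hγ1 a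
      have hm2 := fun a => mem_shuffles hγ2 a
      have hg1 : ∀ x, x ∈ c.1 → x ∈ c.2 → False := by
        intro x h1 h2
        have : x ∈ c.1.toFinset ∩ c.2.toFinset := by simp [List.mem_toFinset, h1, h2]
        rw [g1] at this; simp at this
      have hg2 : ∀ x, x ∈ c'.1 → x ∈ c'.2 → False := by
        intro x h1 h2
        have : x ∈ c'.1.toFinset ∩ c'.2.toFinset := by simp [List.mem_toFinset, h1, h2]
        rw [g2] at this; simp at this
      have hid : γ1.toFinset ∩ γ2.toFinset = ∅ := by
        rw [toFinset_shuffles hγ1, toFinset_shuffles hγ2,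
          Finset.eq_empty_iff_forall_notMem]
        intro x hx
        simp only [Finset.mem_inter, Finset.mem_union, List.mem_toFinset] at hx
        rcases hx.1 with h1 | h1 <;> rcases hx.2 with h2 | h2
        · exact hg1 x h1 h2
        · exact hσσ' x (hc1 x h1) (hc2' x h2)
        · exact hσσ' x (hc2 x h2) (hc1' x h1)
        · exact hg2 x h1 h2
      have e1 : invPart (ρ ++ ρ') γ1 = invPart ρ c.1 ++ invPart ρ' c'.1 := by
        rw [invPart, invPart, invPart, List.filter_append]
        congr 1
        · refine List.filter_congr ?_
          intro a ha
          refine decide_eq_decide.2 ?_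
          rw [hm1 a]
          constructor
          · rintro (h1 | h1)
            · exact h1
            · exact absurd (hc1' a h1) (fun hh => hσσ' a (haσ a ha) hh)
          · exact Or.inl
        · refine List.filter_congr ?_
          intro a ha
          refine decide_eq_decide.2 ?_
          rw [hm1 a]
          constructor
          · rintro (h1 | h1)
            · exact absurd (hc1 a h1) (fun hh => hσσ' a hh (haσ' a ha))
            · exact h1
          · exact Or.inr
      have e2 : invPart (ρ ++ ρ') γ2 = invPart ρ c.2 ++ invPart ρ' c'.2 := by
        rw [invPart, invPart, invPart, List.filter_append]
        congr 1
        · refine List.filter_congr ?_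
          intro a ha
          refine decide_eq_decide.2 ?_
          rw [hm2 a]
          constructor
          · rintro (h1 | h1)
            · exact h1
            · exact absurd (hc2' a h1) (fun hh => hσσ' a (haσ a ha) hh)
          · exact Or.inl
        · refine List.filter_congr ?_
          intro a ha
          refine decide_eq_decide.2 ?_
          rw [hm2 a]
          constructor
          · rintro (h1 | h1)
            · exact absurd (hc2 a h1) (fun hh => hσσ' a hh (haσ' a ha))
            · exact h1
          · exact Or.inr
      simp only [hF, if_pos hid, e1, e2]
    · rw [if_neg g2]
      refine List.sum_eq_zero ?_
      intro x hx
      obtain ⟨γ1, hγ1, rfl⟩ := List.mem_map.1 hx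
      refine List.sum_eq_zero ?_
      intro y hy
      obtain ⟨γ2, hγ2, rfl⟩ := List.mem_map.1 hy
      refine hF0 γ1 γ2 ?_
      obtain ⟨x, hx'⟩ := Finset.nonempty_iff_ne_empty.2 g2
      intro hemp
      rw [Finset.eq_empty_iff_forall_notMem] at hemp
      refine hemp x ?_
      simp only [Finset.mem_inter] at hx' ⊢
      rw [toFinset_shuffles hγ1, toFinset_shuffles hγ2]
      exact ⟨Finset.mem_union_right _ hx'.1, Finset.mem_union_right _ hx'.2⟩
  · rw [if_neg g1]
    refine List.sum_eq_zero ?_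
    intro w hw
    obtain ⟨c', hc', rfl⟩ := List.mem_map.1 hw
    refine List.sum_eq_zero ?_
    intro x hx
    obtain ⟨γ1, hγ1, rfl⟩ := List.mem_map.1 hx
    refine List.sum_eq_zero ?_
    intro y hy
    obtain ⟨γ2, hγ2, rfl⟩ := List.mem_map.1 hy
    refine hF0 γ1 γ2 ?_
    obtain ⟨x, hx'⟩ := Finset.nonempty_iff_ne_empty.2 g1
    intro hemp
    rw [Finset.eq_empty_iff_forall_notMem] at hemp
    refine hemp x ?_
    simp only [Finset.mem_inter] at hx' ⊢
    rw [toFinset_shuffles hγ1, toFinset_shuffles hγ2]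
    exact ⟨Finset.mem_union_left _ hx'.1, Finset.mem_union_left _ hx'.2⟩
end

section
/- If u*v is a term in the product m'(ρ⊗σ) of two permutations in (MPR,m') (i.e., st(u)=ρ, st(v)=σ, supp(u)∪supp(v)={1,...,m+n}), then its descent set is either desc(ρ) ∪ (m + desc(σ)) or desc(ρ) ∪ {m} ∪ (m + desc(σ)), and both possibilities occur among the summands. -/
/-- Standardization of an injective word: each letter is replaced by its rank. -/
def stdz (w : List ℕ) : List ℕ := w.map (fun a => w.countP (fun b => b ≤ a))

/-- `w` is a permutation word: a rearrangement of `[1,…,n]` where `n` is its length. -/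
def IsPermWord (w : List ℕ) : Prop := w.Perm (List.range' 1 w.length)

/-- The descent set of a word `[s₁,…,sₘ]` : those `i ∈ {1,…,m−1}` with `sᵢ > s_{i+1}`. -/
def descSet (w : List ℕ) : Finset ℕ :=
  (Finset.Ioo 0 w.length).filter (fun i => w.getD i 0 < w.getD (i - 1) 0)

/-!
Standardization keeps the relative order of the letters of a word, so `desc(u) = desc(ρ)` and
`desc(v) = desc(σ)`. Inside `u` and inside `v` the descents of `u*v` are those of `u` and of
`v` (shifted by `m`); the only other candidate is the junction `m`, which is a descent exactly
when the last letter of `u` exceeds the first letter of `v`. Putting the large letters in `v`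
(`u = ρ`, `v = m + σ`) or in `u` (`u = n + ρ`, `v = σ`) realises both cases.
-/

section Rank

variable {α : Type*} [LinearOrder α]

theorem List.countP_le_lt_countP_le {w : List α} {a b : α} (hb : b ∈ w) (hab : a < b) :
    w.countP (· ≤ a) < w.countP (· ≤ b) := by
  have hmono : (w.erase b).countP (· ≤ a) ≤ (w.erase b).countP (· ≤ b) :=
    List.countP_mono_left fun x _ hx => by simpa using (of_decide_eq_true hx).trans hab.le
  rw [(List.perm_cons_erase hb).countP_eq, (List.perm_cons_erase hb).countP_eq]
  simp only [List.countP_cons]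
  simp [hab.not_ge]
  omega

theorem List.countP_le_lt_countP_le_iff {w : List α} {a b : α} (ha : a ∈ w) (hb : b ∈ w) :
    w.countP (· ≤ a) < w.countP (· ≤ b) ↔ a < b := by
  refine ⟨fun h => lt_of_not_ge fun hba => ?_, List.countP_le_lt_countP_le hb⟩
  rcases hba.eq_or_lt with rfl | hba
  · exact h.false
  · exact (List.countP_le_lt_countP_le ha hba).not_gt h

end Rank

theorem List.countP_le_range'_one (a n : ℕ) : (List.range' 1 n).countP (· ≤ a) = min a n := by
  induction n with
  | zero => simp
  | succ n ih =>
    rw [List.range'_concat, List.countP_append, ih]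
    simp only [List.countP_singleton, decide_eq_true_eq]
    split <;> omega

theorem mem_descSet {w : List ℕ} {i : ℕ} :
    i ∈ descSet w ↔ 0 < i ∧ i < w.length ∧ w.getD i 0 < w.getD (i - 1) 0 := by
  simp [descSet, and_assoc]

@[simp]
theorem length_stdz (w : List ℕ) : (stdz w).length = w.length := List.length_map _

theorem descSet_stdz (w : List ℕ) : descSet (stdz w) = descSet w := by
  ext i
  simp only [mem_descSet, length_stdz, and_congr_right_iff]
  intro hi0 hi
  have hi1 : i - 1 < w.length := by omega
  simp only [stdz, List.getD_eq_getElem?_getD, List.getElem?_map, List.getElem?_eq_getElem hi,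
    List.getElem?_eq_getElem hi1, Option.map_some, Option.getD_some]
  exact List.countP_le_lt_countP_le_iff (w.getElem_mem _) (w.getElem_mem _)

theorem stdz_map_of_strictMono {f : ℕ → ℕ} (hf : StrictMono f) (w : List ℕ) :
    stdz (w.map f) = stdz w := by
  simp only [stdz, List.map_map, List.countP_map]
  refine List.map_congr_left fun a _ => List.countP_congr fun x _ => ?_
  simp [hf.le_iff_le]

theorem IsPermWord.stdz_eq {w : List ℕ} (hw : IsPermWord w) : stdz w = w := by
  refine (List.map_congr_left fun a ha => ?_).trans (List.map_id w)
  have ha' := List.mem_range'_1.1 (hw.mem_iff.1 ha)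
  rw [hw.countP_eq, List.countP_le_range'_one]
  exact min_eq_left (by omega)

theorem IsPermWord.stdz_map_add {w : List ℕ} (hw : IsPermWord w) (k : ℕ) :
    stdz (w.map (k + ·)) = w := by
  rw [stdz_map_of_strictMono (fun _ _ h => Nat.add_lt_add_left h k), hw.stdz_eq]

theorem List.getD_map_add {w : List ℕ} {i : ℕ} (k : ℕ) (hi : i < w.length) :
    (w.map (k + ·)).getD i 0 = k + w.getD i 0 := by
  simp [List.getElem?_eq_getElem hi]

theorem IsPermWord.getD_mem_Icc {w : List ℕ} (hw : IsPermWord w) {i : ℕ} (hi : i < w.length) :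
    w.getD i 0 ∈ Set.Icc 1 w.length := by
  have := List.mem_range'_1.1 (hw.mem_iff.1 (w.getElem_mem hi))
  rw [List.getD_eq_getElem _ _ hi, Set.mem_Icc]
  omega

theorem IsPermWord.append_map_add {ρ σ : List ℕ} (hρ : IsPermWord ρ) (hσ : IsPermWord σ) :
    (ρ ++ σ.map (ρ.length + ·)).Perm (List.range' 1 (ρ.length + σ.length)) := by
  have hσ' := hσ.map (ρ.length + ·)
  rw [List.map_add_range', Nat.add_comm] at hσ'
  exact List.range'_append_1 ▸ hρ.append hσ'

theorem descSet_append {u v : List ℕ} (hu : u ≠ []) (hv : v ≠ []) :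
    descSet (u ++ v) =
      if v.getD 0 0 < u.getD (u.length - 1) 0 then
        insert u.length (descSet u ∪ (descSet v).image (u.length + ·))
      else descSet u ∪ (descSet v).image (u.length + ·) := by
  have hu : 0 < u.length := List.length_pos_iff.2 hu
  have hv : 0 < v.length := List.length_pos_iff.2 hv
  ext i
  rw [apply_ite (i ∈ ·)]
  simp only [Finset.mem_insert, Finset.mem_union, Finset.mem_image, mem_descSet,
    List.length_append]
  rcases lt_trichotomy i u.length with hi | rfl | hi
  · rw [List.getD_append _ _ _ _ hi, List.getD_append _ _ _ _ (by omega)]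
    grind
  · rw [List.getD_append_right _ _ _ _ le_rfl, Nat.sub_self, List.getD_append _ _ _ _ (by omega)]
    grind
  · rw [List.getD_append_right _ _ _ _ hi.le, List.getD_append_right _ _ _ _ (by omega)]
    grind

theorem descSet_append_of_stdz_eq {u v ρ σ : List ℕ} (hu : stdz u = ρ) (hv : stdz v = σ)
    (hm : 0 < ρ.length) (hn : 0 < σ.length) :
    descSet (u ++ v) =
      if v.getD 0 0 < u.getD (u.length - 1) 0 then
        insert ρ.length (descSet ρ ∪ (descSet σ).image (ρ.length + ·))
      else descSet ρ ∪ (descSet σ).image (ρ.length + ·) := by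
  subst hu hv
  rw [length_stdz] at hm hn ⊢
  rw [descSet_stdz, descSet_stdz, descSet_append (List.length_pos_iff.1 hm)
    (List.length_pos_iff.1 hn)]

/-- If `u*v` is a term of `m'(ρ⊗σ)` (i.e. `st(u) = ρ`, `st(v) = σ`, and `u*v` uses each
letter of `{1,…,m+n}` once), then `desc(u*v)` is either `desc(ρ) ∪ (m + desc(σ))` or
`desc(ρ) ∪ {m} ∪ (m + desc(σ))`, and both possibilities occur among the summands. -/
theorem stmt12 (ρ σ : List ℕ) (hρ : IsPermWord ρ) (hσ : IsPermWord σ)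
    (hm : 0 < ρ.length) (hn : 0 < σ.length) :
    (∀ u v : List ℕ, stdz u = ρ → stdz v = σ →
        (u ++ v).Perm (List.range' 1 (ρ.length + σ.length)) →
        descSet (u ++ v) = descSet ρ ∪ (descSet σ).image (ρ.length + ·) ∨
          descSet (u ++ v)
            = insert ρ.length (descSet ρ ∪ (descSet σ).image (ρ.length + ·))) ∧
    (∃ u v : List ℕ, stdz u = ρ ∧ stdz v = σ ∧
        (u ++ v).Perm (List.range' 1 (ρ.length + σ.length)) ∧
        descSet (u ++ v) = descSet ρ ∪ (descSet σ).image (ρ.length + ·)) ∧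
    (∃ u v : List ℕ, stdz u = ρ ∧ stdz v = σ ∧
        (u ++ v).Perm (List.range' 1 (ρ.length + σ.length)) ∧
        descSet (u ++ v)
          = insert ρ.length (descSet ρ ∪ (descSet σ).image (ρ.length + ·))) := by
  obtain ⟨hρ_last_pos, hρ_last_le⟩ := hρ.getD_mem_Icc (i := ρ.length - 1) (by omega)
  obtain ⟨hσ_head_pos, hσ_head_le⟩ := hσ.getD_mem_Icc hn
  have hσ_shift := hσ.stdz_map_add ρ.length
  have hρ_shift := hρ.stdz_map_add σ.length
  refine ⟨fun u v hu hv _ => ?_, ⟨ρ, _, hρ.stdz_eq, hσ_shift, hρ.append_map_add hσ, ?_⟩,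
    ⟨_, σ, hρ_shift, hσ.stdz_eq, ?_, ?_⟩⟩
  · rw [descSet_append_of_stdz_eq hu hv hm hn]
    exact (ite_eq_or_eq _ _ _).symm
  · rw [descSet_append_of_stdz_eq hρ.stdz_eq hσ_shift hm hn, if_neg]
    rw [List.getD_map_add _ hn]
    omega
  · exact List.perm_append_comm.trans (Nat.add_comm σ.length ρ.length ▸ hσ.append_map_add hρ)
  · rw [descSet_append_of_stdz_eq hρ_shift hσ.stdz_eq hm hn, if_pos]
    rw [List.length_map, List.getD_map_add _ (by omega)]
    omega
end
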